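/- arXiv:1411.3081 — 3 statements merged into one kernel-verified Lean document; each statement's English description precedes it below -/
import Mathlib

section
/- If z is a periodic point of odd period p for the anti-holomorphic map f_c(z) = conj(z)^2 + c, then the multiplier of z as a periodic point of the holomorphic map g = f_c^2 (i.e., the derivative (g^p)'(z), where z has period p under g) is a real nonnegative number. -/
open Complex Function

/-- The anti-holomorphic quadratic map `f_c(z) = conj(z)^2 + c`. -/
noncomputable def tricornMap (c : ℂ) : ℂ → ℂ := fun z => (starRingEnd ℂ z) ^ 2 + c

lemma hasDerivAt_conj_conj {H : ℂ → ℂ} {d w : ℂ}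
    (h : HasDerivAt H d ((starRingEnd ℂ) w)) :
    HasDerivAt (fun x => (starRingEnd ℂ) (H ((starRingEnd ℂ) x))) ((starRingEnd ℂ) d) w := by
  rw [hasDerivAt_iff_tendsto] at h ⊢
  have hconj : Filter.Tendsto (starRingEnd ℂ) (nhds w) (nhds ((starRingEnd ℂ) w)) :=
    (Complex.continuous_conj).continuousAt
  refine (h.comp hconj).congr (fun x => ?_)
  have h1 : ((starRingEnd ℂ) x - (starRingEnd ℂ) w) = (starRingEnd ℂ) (x - w) := by
    rw [map_sub]
  have h2 : (starRingEnd ℂ) (H ((starRingEnd ℂ) x)) - (starRingEnd ℂ) (H ((starRingEnd ℂ) w))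
      - (x - w) • (starRingEnd ℂ) d
      = (starRingEnd ℂ) (H ((starRingEnd ℂ) x) - H ((starRingEnd ℂ) w)
          - ((starRingEnd ℂ) x - (starRingEnd ℂ) w) • d) := by
    simp [smul_eq_mul, map_sub, map_mul]
  rw [Function.comp_apply, h1, h2, RCLike.norm_conj, RCLike.norm_conj, ← h1]

/-- If `z` is a periodic point of odd (minimal) period `p` for `f_c`, then the multiplier
of `z` as a periodic point of the holomorphic second iterate `g = f_c²`, i.e.
`(g^p)'(z)`, is a real nonnegative number. -/
theorem stmt_4 (c z : ℂ) (p : ℕ) (hp : Odd p)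
    (hper : Function.IsPeriodicPt (tricornMap c) p z)
    (hmin : Function.minimalPeriod (tricornMap c) z = p) :
    ∃ r : ℝ, 0 ≤ r ∧ deriv ((tricornMap c ∘ tricornMap c)^[p]) z = (r : ℂ) := by
  obtain ⟨k, hk⟩ := hp
  set f := tricornMap c with hf
  set r : ℂ → ℂ := fun w => w ^ 2 + c with hr
  set rb : ℂ → ℂ := fun w => w ^ 2 + (starRingEnd ℂ) c with hrb
  have hff : f ∘ f = r ∘ rb := by
    funext w
    simp only [hf, tricornMap, hr, hrb, Function.comp_apply, map_add, map_pow,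
      Complex.conj_conj]
  set H : ℂ → ℂ := (r ∘ rb)^[k] ∘ r with hH
  have hfp : f^[p] = H ∘ (starRingEnd ℂ) := by
    have h2k : f^[2 * k] = (r ∘ rb)^[k] := by
      rw [Function.iterate_mul, ← hff]
      congr 1
    have : f^[p] = f^[2 * k] ∘ f := by
      rw [hk, Function.iterate_add, Function.iterate_one]
    rw [this, h2k]
    funext w
    simp only [hH, Function.comp_apply, hf, tricornMap, hr]
  -- differentiability of H
  have hHdiff : Differentiable ℂ H := by
    have hrd : Differentiable ℂ r := by
      simp only [hr]; fun_prop
    have hrbd : Differentiable ℂ rb := by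
      simp only [hrb]; fun_prop
    exact (Differentiable.iterate (hrd.comp hrbd) k).comp hrd
  set d := deriv H ((starRingEnd ℂ) z) with hd
  have hHder : HasDerivAt H d ((starRingEnd ℂ) z) :=
    (hHdiff ((starRingEnd ℂ) z)).hasDerivAt
  set K : ℂ → ℂ := fun x => (starRingEnd ℂ) (H ((starRingEnd ℂ) x)) with hK
  have hKder : HasDerivAt K ((starRingEnd ℂ) d) z := hasDerivAt_conj_conj hHder
  have hKz : K z = (starRingEnd ℂ) z := by
    have : H ((starRingEnd ℂ) z) = z := by
      have := hper
      rw [Function.IsPeriodicPt, Function.IsFixedPt, hfp] at this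
      exact this
    simp [hK, this]
  have hcomp : (f ∘ f)^[p] = H ∘ K := by
    have : (f ∘ f)^[p] = f^[2 * p] := by
      rw [Function.iterate_mul]
      congr 1
    rw [this, two_mul, Function.iterate_add, hfp]
    funext w
    simp [hK, Function.comp_apply]
  have hHK : HasDerivAt (H ∘ K) (d * (starRingEnd ℂ) d) z := by
    have hH2 : HasDerivAt H d (K z) := by rw [hKz]; exact hHder
    exact hH2.comp z hKder
  refine ⟨Complex.normSq d, Complex.normSq_nonneg d, ?_⟩
  rw [hcomp, hHK.deriv, Complex.mul_conj]
end

section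
/- There are exactly three complex parameters c for which 0 is a periodic point of exact period 3 under f_c(z) = conj(z)^2 + c; namely c = c*, ω c*, ω² c*, where c* is the unique negative real root of c^3 + 2c^2 + c + 1 = 0 (equivalently the unique real c < 0 with f_c^3(0) = 0), and ω = (-1 + √3 i)/2. -/
open Complex Function

private noncomputable def Wc : ℂ := (-1 + Real.sqrt 3 * I) / 2

private lemma h3c : ((Real.sqrt 3 : ℝ) : ℂ)^2 = 3 := by
  rw [← Complex.ofReal_pow, Real.sq_sqrt (by norm_num : (3:ℝ) ≥ 0)]; norm_num

private lemma hW3 : Wc^3 = 1 := by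
  unfold Wc
  linear_combination (((Real.sqrt 3:ℂ)^3*I - 3*(Real.sqrt 3:ℂ)^2)/8) * Complex.I_sq +
    ((3 - (Real.sqrt 3:ℂ)*I)/8) * h3c

private lemma hWconj : (starRingEnd ℂ) Wc = Wc^2 := by
  have h : (starRingEnd ℂ) Wc = (-1 - Real.sqrt 3 * I)/2 := by
    unfold Wc
    simp [map_div₀, map_add, map_mul, map_ofNat, Complex.conj_ofReal, Complex.conj_I]
    ring
  rw [h]; unfold Wc
  linear_combination (-(Real.sqrt 3:ℂ)^2/4) * Complex.I_sq + (1/4 : ℂ) * h3c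

private lemma hW0 : Wc ≠ 0 := by
  intro h
  have := hW3
  rw [h] at this; norm_num at this

private lemma iterate3 (c : ℂ) :
    (tricornMap c)^[3] 0 = c^4 + 2*c^2*(starRingEnd ℂ c) + (starRingEnd ℂ c)^2 + c := by
  simp only [Function.iterate_succ, Function.iterate_zero, Function.comp_apply, id_eq, tricornMap]
  simp only [map_add, map_pow, Complex.conj_conj, map_zero]
  ring

private lemma minper (c : ℂ) (hc : c ≠ 0)
    (h : c^4 + 2*c^2*(starRingEnd ℂ c) + (starRingEnd ℂ c)^2 + c = 0) :
    Function.minimalPeriod (tricornMap c) 0 = 3 := by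
  have h3 : IsPeriodicPt (tricornMap c) 3 0 := by
    show (tricornMap c)^[3] 0 = 0
    rw [iterate3]; exact h
  have hd := h3.minimalPeriod_dvd
  rcases (Nat.prime_three.eq_one_or_self_of_dvd _ hd) with h1 | h1
  · exfalso
    have hper := Function.isPeriodicPt_minimalPeriod (tricornMap c) 0
    rw [h1] at hper
    have : tricornMap c 0 = 0 := hper
    simp [tricornMap] at this
    exact hc this
  · exact h1

/-- There are exactly three parameters `c` for which `0` has exact period 3 under
`f_c`: namely `c*`, `ω c*`, `ω² c*`, where `c*` is the unique negative real root of
`c³ + 2c² + c + 1 = 0` and `ω = (-1 + √3 i)/2`. -/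
theorem stmt_6 (cst : ℝ) (hneg : cst < 0)
    (hroot : cst ^ 3 + 2 * cst ^ 2 + cst + 1 = 0)
    (huniq : ∀ x : ℝ, x < 0 → x ^ 3 + 2 * x ^ 2 + x + 1 = 0 → x = cst) :
    {c : ℂ | Function.minimalPeriod (tricornMap c) 0 = 3} =
      {(cst : ℂ), ((-1 + Real.sqrt 3 * I) / 2) * cst,
        ((-1 + Real.sqrt 3 * I) / 2) ^ 2 * cst} := by
  have hrc : (cst:ℂ)^3 + 2*(cst:ℂ)^2 + (cst:ℂ) + 1 = 0 := by
    exact_mod_cast congrArg (Complex.ofReal) hroot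
  have hcst0 : (cst:ℂ) ≠ 0 := Complex.ofReal_ne_zero.mpr (ne_of_lt hneg)
  ext c
  simp only [Set.mem_setOf_eq, Set.mem_insert_iff, Set.mem_singleton_iff]
  constructor
  · intro hmin
    -- extract the algebraic equation
    have hpp : IsPeriodicPt (tricornMap c) 3 0 := by
      have := Function.isPeriodicPt_minimalPeriod (tricornMap c) 0
      rwa [hmin] at this
    have hg : c^4 + 2*c^2*(starRingEnd ℂ c) + (starRingEnd ℂ c)^2 + c = 0 := by
      have h3 : (tricornMap c)^[3] 0 = 0 := hpp
      rwa [iterate3] at h3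
    have hc0 : c ≠ 0 := by
      intro h
      have h1 : IsPeriodicPt (tricornMap c) 1 0 := by
        show (tricornMap c)^[1] 0 = 0
        simp [tricornMap, h]
      have := h1.minimalPeriod_le one_pos
      omega
    -- real coordinates
    set a := c.re with ha
    set b := c.im with hb
    have hc_eq : c = (a:ℂ) + (b:ℂ)*I := (Complex.re_add_im c).symm
    rw [hc_eq] at hg
    rw [show (starRingEnd ℂ) ((a:ℂ) + (b:ℂ)*I) = (a:ℂ) - (b:ℂ)*I by
      simp [map_add, map_mul, Complex.conj_ofReal, Complex.conj_I]; ring] at hg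
    have hre := congrArg Complex.re hg
    have him := congrArg Complex.im hg
    simp only [pow_succ, pow_zero, one_mul, Complex.add_re, Complex.add_im, Complex.sub_re,
      Complex.sub_im, Complex.mul_re, Complex.mul_im, Complex.ofReal_re, Complex.ofReal_im,
      Complex.I_re, Complex.I_im, Complex.re_ofNat, Complex.im_ofNat, Complex.zero_re,
      Complex.zero_im, mul_zero, mul_one, zero_mul, sub_zero, zero_sub, add_zero, zero_add,
      neg_zero, neg_neg] at hre him
    have hP : a^4 - 6*a^2*b^2 + b^4 + 2*a^3 + 2*a*b^2 + a^2 - b^2 + a = 0 := by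
      linear_combination hre
    have hQ : b * (4*a^3 - 4*a*b^2 + 2*a^2 + 2*b^2 - 2*a + 1) = 0 := by
      linear_combination him
    have hs : Real.sqrt 3 ^ 2 = 3 := Real.sq_sqrt (by norm_num)
    by_cases hb0 : b = 0
    · -- real case
      left
      have ha0 : a ≠ 0 := by
        intro h
        apply hc0
        rw [hc_eq, h, hb0]; simp
      have hcube : a * (a^3 + 2*a^2 + a + 1) = 0 := by
        rw [hb0] at hP; linear_combination hP
      have hcube' : a^3 + 2*a^2 + a + 1 = 0 := by
        rcases mul_eq_zero.mp hcube with h | h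
        · exact absurd h ha0
        · exact h
      have haneg : a < 0 := by nlinarith [sq_nonneg a, sq_nonneg (a+1)]
      have := huniq a haneg hcube'
      rw [hc_eq, hb0, this]; simp
    · -- non-real case
      have hQ1 : 4*a^3 - 4*a*b^2 + 2*a^2 + 2*b^2 - 2*a + 1 = 0 :=
        (mul_eq_zero.mp hQ).resolve_left hb0
      have hfac : ((-2*a)^3 + 2*(-2*a)^2 + (-2*a) + 1) * ((-2*a)^3 - 3*(-2*a) - 3) = 0 := by
        linear_combination (-(2-4*a)^2) * hP +
          ((2-4*a)*b^2 + (-6*a^2+2*a-1)*(2-4*a) - (4*a^3+2*a^2-2*a+1)) * hQ1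
      rcases mul_eq_zero.mp hfac with hcu | hgh
      · -- good case
        have hcu' : -8*a^3 + 8*a^2 - 2*a + 1 = 0 := by linear_combination hcu
        have ha2 : (2:ℝ) - 4*a ≠ 0 := by
          intro h
          have : a = 1/2 := by linarith
          rw [this] at hcu'; norm_num at hcu'
        have hb2 : b^2 = 3*a^2 := by
          have h1 : (2-4*a)*(b^2-3*a^2) = 0 := by linear_combination hQ1 - hcu'
          have := (mul_eq_zero.mp h1).resolve_left ha2
          linarith
        have hwneg : -2*a < 0 := by nlinarith [sq_nonneg a, sq_nonneg (2*a-1)]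
        have hcsteq : -2*a = cst := huniq (-2*a) hwneg (by linear_combination hcu)
        have hfact : (b - Real.sqrt 3*a) * (b + Real.sqrt 3*a) = 0 := by
          linear_combination hb2 + (-a^2) * hs
        rcases mul_eq_zero.mp hfact with h | h
        · -- b = √3 a : c = W² cst
          right; right
          have hbc : (b:ℂ) = (Real.sqrt 3:ℂ) * (a:ℂ) := by
            have : b = Real.sqrt 3 * a := by linarith
            exact_mod_cast congrArg (Complex.ofReal) this
          rw [hc_eq, ← hcsteq]
          push_cast
          linear_combination (I) * hbc + ((a:ℂ)*((Real.sqrt 3:ℂ))^2/2) * Complex.I_sq +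
            (-(a:ℂ)/2) * h3c
        · -- b = -√3 a : c = W cst
          right; left
          have hbc : (b:ℂ) = -(Real.sqrt 3:ℂ) * (a:ℂ) := by
            have : b = -(Real.sqrt 3) * a := by linarith
            exact_mod_cast congrArg (Complex.ofReal) this
          rw [hc_eq, ← hcsteq]
          push_cast
          linear_combination (I) * hbc
      · -- ghost case: contradiction
        exfalso
        have hgh' : -8*a^3 + 6*a - 3 = 0 := by linear_combination hgh
        have hagt : a < -1 := by nlinarith [sq_nonneg (-2*a+1)]
        have hkey : 4*(1-2*a)*b^2 = -4*a^2 - 2*a + 1 := by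
          linear_combination 2*hQ1 + hgh'
        have hbpos : 0 < b^2 := by positivity
        nlinarith [hkey, hagt, hbpos]
  · intro hmem
    rcases hmem with h | h | h
    · subst h
      apply minper _ hcst0
      rw [Complex.conj_ofReal]
      linear_combination (cst:ℂ) * hrc
    · rw [show ((-1 + (Real.sqrt 3:ℂ) * I) / 2) = Wc from rfl] at h
      subst h
      apply minper _ (mul_ne_zero hW0 hcst0)
      rw [map_mul, Complex.conj_ofReal, hWconj]
      linear_combination (Wc*(cst:ℂ)) * hrc + (Wc*((cst:ℂ)^4+2*(cst:ℂ)^3+(cst:ℂ)^2)) * hW3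
    · rw [show ((-1 + (Real.sqrt 3:ℂ) * I) / 2) = Wc from rfl] at h
      subst h
      apply minper _ (mul_ne_zero (pow_ne_zero 2 hW0) hcst0)
      rw [map_mul, Complex.conj_ofReal, map_pow, hWconj]
      linear_combination (Wc^2*(cst:ℂ)) * hrc +
        (Wc^2*(Wc^3+1)*((cst:ℂ)^4+2*(cst:ℂ)^3+(cst:ℂ)^2)) * hW3
end

section
/- Let c ∈ ℂ with f_c^3(0) = 0 and c not real (c ≠ conj c). Set s = c + conj(c) and t = |c|². Then s and t satisfy t = (s³ - s + 1)/(2(s-1)) and (s³ - 3s + 3)(s³ - 2s² + s - 1) = 0. -/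
open Complex Function

/-- Let `c` be non-real with `f_c³(0) = 0`. With `s = c + conj c` and `t = |c|²`, one has
`t = (s³ - s + 1)/(2(s-1))` and `(s³ - 3s + 3)(s³ - 2s² + s - 1) = 0`. -/
theorem stmt_8 (c : ℂ) (hc : c ≠ starRingEnd ℂ c)
    (h3 : (tricornMap c)^[3] 0 = 0) :
    (Complex.normSq c : ℝ) =
      ((2 * c.re) ^ 3 - (2 * c.re) + 1) / (2 * ((2 * c.re) - 1)) ∧
    ((2 * c.re) ^ 3 - 3 * (2 * c.re) + 3) *
      ((2 * c.re) ^ 3 - 2 * (2 * c.re) ^ 2 + (2 * c.re) - 1) = 0 := by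
  have hy : c.im ≠ 0 := by
    intro h
    exact hc (by rw [Complex.conj_eq_iff_im.2 h])
  have key : c ^ 4 + 2 * c ^ 2 * (starRingEnd ℂ c) + (starRingEnd ℂ c) ^ 2 + c = 0 := by
    have h := h3
    simp only [Function.iterate_succ, Function.iterate_zero, Function.comp_apply, id_eq,
      tricornMap, map_add, map_pow, map_zero, Complex.conj_conj] at h
    linear_combination h
  set x := c.re with hx
  set y := c.im with hyy
  have hre := congrArg Complex.re key
  have him := congrArg Complex.im key
  simp only [Complex.add_re, Complex.add_im, Complex.mul_re, Complex.mul_im,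
    Complex.conj_re, Complex.conj_im, Complex.zero_re, Complex.zero_im,
    pow_succ, pow_zero, one_mul, Complex.one_re, Complex.one_im,
    Complex.ofReal_re, Complex.ofReal_im, Complex.re_ofNat, Complex.im_ofNat] at hre him
  -- him = y * Q = 0 with Q the polynomial; divide by y
  have hA : (2*x)^3 - 2*(2*x)*(x^2+y^2) + 2*(x^2+y^2) - (2*x) + 1 = 0 := by
    have hQ : y * (8*x^3 - 4*x*(x^2+y^2) + 2*(x^2+y^2) - 2*x + 1) = 0 := by
      nlinarith [him, sq_nonneg y]
    have := mul_eq_zero.1 hQ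
    rcases this with h | h
    · exact absurd h hy
    · nlinarith [h]
  have hB : (2*x)^4 - 4*(2*x)^2*(x^2+y^2) + 2*(x^2+y^2)^2 + 2*(2*x)*(x^2+y^2)
      + (2*x)^2 - 2*(x^2+y^2) + (2*x) = 0 := by
    nlinarith [hre]
  have hs1 : 2*x - 1 ≠ 0 := by
    intro h
    have : x = 1/2 := by linarith
    rw [this] at hA
    nlinarith [hA]
  constructor
  · rw [Complex.normSq_apply]
    field_simp
    nlinarith [hA]
  · linear_combination (3*(2*x)^3 - 6*(2*x)^2 + 5*(2*x) - 3 + (2 - 2*(2*x))*(x^2+y^2)) * hA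
      - 2*((2*x) - 1)^2 * hB
end
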